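/- Let E be a complete real inner product space, N ≥ 1, and for j = 1,…,N let f_j : E → ℝ be differentiable and L-smooth, and let w_j > 0, S_j > 0 be real constants. Define g : E → ℝ by g(θ) = (1/N)·Σ_{j=1}^N ln(w_j·exp(−f_j(θ)) + S_j). Then for all θ_1, θ_2 ∈ E, g(θ_1) ≥ g(θ_2) + ⟨∇g(θ_2), θ_1 − θ_2⟩ − (L/2 + (3/(16N))·Σ_{j=1}^N ‖∇f_j(θ_2)‖²)·‖θ_1 − θ_2‖² − ((L/(16N))·Σ_{j=1}^N ‖∇f_j(θ_2)‖)·‖θ_1 − θ_2‖³. -/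

import Mathlib

/-!
With `φ(u) = log (w e^{-u} + S)`, one has `φ' = -σ` where `σ(u) = w e^{-u} / (w e^{-u} + S)`
lies in `[0, 1]`, and `φ` lies above its tangent lines (convexity of `exp`). Hence
`φ(f θ₁) ≥ φ(f θ₂) - σ (f θ₁ - f θ₂)`; as `-σ ≤ 0`, the descent lemma
`f θ₁ - f θ₂ ≤ ⟪∇f θ₂, θ₁ - θ₂⟫ + L/2 ‖θ₁ - θ₂‖²` may be substituted, and `σ ≤ 1` bounds the loss
by `L/2 ‖θ₁ - θ₂‖²`. Averaging over `j` keeps this bound, which is already stronger than the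
claimed one: the two gradient terms are nonnegative since `L ‖θ₁ - θ₂‖² ≥ 0`.
-/

open Finset Real
open scoped Gradient RealInnerProductSpace

lemma mul_norm_sub_sq_nonneg {E F : Type*} [SeminormedAddCommGroup E] [SeminormedAddCommGroup F]
    {φ : E → F} {L : ℝ}
    (hφ : ∀ a b, ‖φ a - φ b‖ ≤ L * ‖a - b‖) (a b : E) : 0 ≤ L * ‖a - b‖ ^ 2 := by
  have hL : 0 ≤ L * ‖a - b‖ := (norm_nonneg _).trans (hφ a b)
  calc (0 : ℝ) ≤ L * ‖a - b‖ * ‖a - b‖ := mul_nonneg hL (norm_nonneg _)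
    _ = L * ‖a - b‖ ^ 2 := by ring

noncomputable def expShare (w S u : ℝ) : ℝ := w * exp (-u) / (w * exp (-u) + S)

lemma expShare_mem_Icc {w S : ℝ} (hw : 0 ≤ w) (hS : 0 ≤ S) (u : ℝ) : expShare w S u ∈ Set.Icc 0 1 :=
  ⟨by unfold expShare; positivity,
    div_le_one_of_le₀ (le_add_of_nonneg_right hS) (by positivity)⟩

lemma hasDerivAt_log_mul_exp_neg_add {w S : ℝ} (hw : 0 ≤ w) (hS : 0 < S) (u : ℝ) :
    HasDerivAt (fun u => log (w * exp (-u) + S)) (-expShare w S u) u := by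
  have hpos : 0 < w * exp (-u) + S := by positivity
  refine ((((hasDerivAt_neg u).exp).const_mul w).add_const S).log hpos.ne' |>.congr_deriv ?_
  unfold expShare
  ring

lemma log_mul_exp_neg_add_tangent_le {w S : ℝ} (hw : 0 ≤ w) (hS : 0 < S) (u v : ℝ) :
    log (w * exp (-u) + S) + -expShare w S u * (v - u) ≤ log (w * exp (-v) + S) := by
  set A := w * exp (-u) + S
  set σ := expShare w S u
  have hA : 0 < A := by positivity
  obtain ⟨hσ0, hσ1⟩ := expShare_mem_Icc hw hS.le u
  have hjensen : exp (-(σ * (v - u))) ≤ σ * exp (-(v - u)) + (1 - σ) := by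
    have := convexOn_exp.2 (Set.mem_univ (-(v - u))) (Set.mem_univ 0) hσ0 (sub_nonneg.2 hσ1)
      (add_sub_cancel σ 1)
    simpa only [smul_eq_mul, mul_zero, add_zero, exp_zero, mul_one, mul_neg] using this
  have hfactor : w * exp (-v) + S = A * (σ * exp (-(v - u)) + (1 - σ)) := by
    have : σ * A = w * exp (-u) := div_mul_cancel₀ _ hA.ne'
    rw [show -v = -u + -(v - u) by ring, exp_add]
    linear_combination (1 - exp (-(v - u))) * this
  have hpos : 0 < σ * exp (-(v - u)) + (1 - σ) := (exp_pos _).trans_le hjensen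
  rw [hfactor, log_mul hA.ne' hpos.ne']
  have := log_le_log (exp_pos _) hjensen
  rw [log_exp] at this
  linarith

section LowerBound

variable {E : Type*} [NormedAddCommGroup E] [InnerProductSpace ℝ E] [CompleteSpace E]

theorem le_add_inner_gradient_add_of_lipschitz_gradient {f : E → ℝ} (hf : Differentiable ℝ f)
    {L : ℝ} (hL : ∀ a b, ‖∇ f a - ∇ f b‖ ≤ L * ‖a - b‖) (x y : E) :
    f y ≤ f x + ⟪∇ f x, y - x⟫ + L / 2 * ‖y - x‖ ^ 2 := by
  set v := y - x
  have hline (t : ℝ) : HasDerivAt (fun t : ℝ => f (x + t • v)) ⟪∇ f (x + t • v), v⟫ t := by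
    have hmove : HasDerivAt (fun t : ℝ => x + t • v) v t := by
      simpa using ((hasDerivAt_id t).smul_const v).const_add x
    rw [inner_gradient_left]
    exact (hf (x + t • v)).hasFDerivAt.comp_hasDerivAt t hmove
  have hslope (t : ℝ) (ht : 0 ≤ t) : ⟪∇ f (x + t • v), v⟫ ≤ ⟪∇ f x, v⟫ + L * ‖v‖ ^ 2 * t := by
    have : ⟪∇ f (x + t • v) - ∇ f x, v⟫ ≤ L * ‖v‖ ^ 2 * t := calc
      _ ≤ ‖∇ f (x + t • v) - ∇ f x‖ * ‖v‖ := real_inner_le_norm _ _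
      _ ≤ L * ‖x + t • v - x‖ * ‖v‖ := mul_le_mul_of_nonneg_right (hL _ _) (norm_nonneg _)
      _ = L * ‖v‖ ^ 2 * t := by rw [add_sub_cancel_left, norm_smul, norm_of_nonneg ht]; ring
    rw [inner_sub_left] at this
    linarith
  have hbound (t : ℝ) : HasDerivAt (fun t : ℝ => f x + t * ⟪∇ f x, v⟫ + L / 2 * ‖v‖ ^ 2 * t ^ 2)
      (⟪∇ f x, v⟫ + L * ‖v‖ ^ 2 * t) t := by
    refine (((hasDerivAt_mul_const ⟪∇ f x, v⟫).const_add (f x)).add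
      ((hasDerivAt_pow 2 t).const_mul (L / 2 * ‖v‖ ^ 2))).congr_deriv ?_
    norm_num
    ring
  have := image_le_of_deriv_right_le_deriv_boundary (a := 0) (b := 1)
    (fun t _ => (hline t).continuousAt.continuousWithinAt)
    (fun t _ => (hline t).hasDerivWithinAt) (by simp) (by fun_prop)
    (fun t _ => (hbound t).hasDerivWithinAt) (fun t ht => hslope t ht.1)
    (Set.right_mem_Icc.2 zero_le_one)
  simpa [v] using this

theorem add_inner_gradient_comp_sub_le {f : E → ℝ} (hf : Differentiable ℝ f) {L : ℝ}
    (hL : ∀ a b, ‖∇ f a - ∇ f b‖ ≤ L * ‖a - b‖) {φ : ℝ → ℝ} {φ' : ℝ} {x : E}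
    (hφ : HasDerivAt φ φ' (f x)) (hφ' : φ' ∈ Set.Icc (-1) 0)
    (htangent : ∀ v, φ (f x) + φ' * (v - f x) ≤ φ v) (y : E) :
    φ (f x) + ⟪∇ (fun θ => φ (f θ)) x, y - x⟫ - L / 2 * ‖y - x‖ ^ 2 ≤ φ (f y) := by
  have hgrad : ⟪∇ (fun θ => φ (f θ)) x, y - x⟫ = φ' * ⟪∇ f x, y - x⟫ := by
    have hφf : HasFDerivAt (fun θ => φ (f θ)) (φ' • fderiv ℝ f x) x :=
      hφ.comp_hasFDerivAt x (hf x).hasFDerivAt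
    rw [inner_gradient_left, hφf.fderiv, inner_gradient_left]
    rfl
  have hdescent := le_add_inner_gradient_add_of_lipschitz_gradient hf hL x y
  have htan := htangent (f y)
  have hslope : φ' * (⟪∇ f x, y - x⟫ + L / 2 * ‖y - x‖ ^ 2) ≤ φ' * (f y - f x) :=
    mul_le_mul_of_nonpos_left (by linarith) hφ'.2
  have hloss : 0 ≤ (1 + φ') * (L * ‖y - x‖ ^ 2) :=
    mul_nonneg (by linarith [hφ'.1]) (mul_norm_sub_sq_nonneg hL y x)
  rw [hgrad]
  linarith

theorem add_inner_gradient_average_sub_le {ι : Type*} [Fintype ι] [Nonempty ι]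
    {h : ι → E → ℝ} {g : E → ℝ} (hg : ∀ θ, g θ = 1 / (Fintype.card ι : ℝ) * ∑ i, h i θ)
    {x y : E} (hd : ∀ i, DifferentiableAt ℝ (h i) x) {c : ℝ}
    (hb : ∀ i, h i x + ⟪∇ (h i) x, y - x⟫ - c ≤ h i y) :
    g x + ⟪∇ g x, y - x⟫ - c ≤ g y := by
  have hgrad : ⟪∇ g x, y - x⟫ = 1 / (Fintype.card ι : ℝ) * ∑ i, ⟪∇ (h i) x, y - x⟫ := by
    have hgd : HasFDerivAt g ((1 / (Fintype.card ι : ℝ)) • ∑ i, fderiv ℝ (h i) x) x := by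
      rw [funext hg]
      exact (HasFDerivAt.fun_sum fun i _ => (hd i).hasFDerivAt).const_mul _
    simp [inner_gradient_left, hgd.fderiv]
  have hcard : (Fintype.card ι : ℝ) ≠ 0 := by positivity
  calc g x + ⟪∇ g x, y - x⟫ - c
      = 1 / (Fintype.card ι : ℝ) * ∑ i, (h i x + ⟪∇ (h i) x, y - x⟫ - c) := by
        rw [hg, hgrad, sum_sub_distrib, sum_add_distrib, sum_const, card_univ, nsmul_eq_mul]
        field_simp
    _ ≤ 1 / (Fintype.card ι : ℝ) * ∑ i, h i y := by gcongr with i; exact hb i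
    _ = g y := (hg y).symm

end LowerBound

theorem stmt_8 {E : Type*} [NormedAddCommGroup E] [InnerProductSpace ℝ E] [CompleteSpace E]
    (N : ℕ) (hN : 1 ≤ N)
    (f : Fin N → E → ℝ) (hf : ∀ j, Differentiable ℝ (f j)) (L : ℝ)
    (hsmooth : ∀ (j : Fin N) (a b : E),
      ‖gradient (f j) a - gradient (f j) b‖ ≤ L * ‖a - b‖)
    (w S : Fin N → ℝ) (hw : ∀ j, 0 < w j) (hS : ∀ j, 0 < S j)
    (g : E → ℝ)
    (hg : ∀ θ, g θ = (1 / (N : ℝ)) * ∑ j, Real.log (w j * Real.exp (-(f j θ)) + S j)) :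
    ∀ θ1 θ2 : E,
      g θ1 ≥ g θ2 + (inner ℝ (gradient g θ2) (θ1 - θ2) : ℝ) -
        (L / 2 + (3 / (16 * (N : ℝ))) * ∑ j, ‖gradient (f j) θ2‖ ^ 2) * ‖θ1 - θ2‖ ^ 2 -
        ((L / (16 * (N : ℝ))) * ∑ j, ‖gradient (f j) θ2‖) * ‖θ1 - θ2‖ ^ 3 := by
  intro θ1 θ2
  have : Nonempty (Fin N) := ⟨⟨0, hN⟩⟩
  have hφ (j : Fin N) (θ : E) := hasDerivAt_log_mul_exp_neg_add (hw j).le (hS j) (f j θ)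
  have hterm (j : Fin N) :
      log (w j * exp (-(f j θ2)) + S j) + ⟪∇ (fun θ => log (w j * exp (-(f j θ)) + S j)) θ2,
        θ1 - θ2⟫ - L / 2 * ‖θ1 - θ2‖ ^ 2 ≤ log (w j * exp (-(f j θ1)) + S j) := by
    obtain ⟨hσ0, hσ1⟩ := expShare_mem_Icc (hw j).le (hS j).le (f j θ2)
    exact add_inner_gradient_comp_sub_le (hf j) (hsmooth j) (hφ j θ2)
      ⟨neg_le_neg hσ1, neg_nonpos.2 hσ0⟩
      (log_mul_exp_neg_add_tangent_le (hw j).le (hS j) (f j θ2)) θ1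
  have hquadratic : g θ2 + ⟪∇ g θ2, θ1 - θ2⟫ - L / 2 * ‖θ1 - θ2‖ ^ 2 ≤ g θ1 :=
    add_inner_gradient_average_sub_le (h := fun j θ => log (w j * exp (-(f j θ)) + S j))
      (fun θ => by rw [hg, Fintype.card_fin])
      (fun j => ((hφ j θ2).comp_hasFDerivAt θ2 (hf j θ2).hasFDerivAt).differentiableAt) hterm
  have hcurv := mul_norm_sub_sq_nonneg (hsmooth ⟨0, hN⟩) θ1 θ2
  have hsq : 0 ≤ (3 / (16 * (N : ℝ)) * ∑ j, ‖∇ (f j) θ2‖ ^ 2) * ‖θ1 - θ2‖ ^ 2 := by positivity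
  have hcube : 0 ≤ (L / (16 * (N : ℝ)) * ∑ j, ‖∇ (f j) θ2‖) * ‖θ1 - θ2‖ ^ 3 := by
    have : 0 ≤ (∑ j, ‖∇ (f j) θ2‖) * ‖θ1 - θ2‖ / (16 * (N : ℝ)) := by positivity
    calc (0 : ℝ) ≤ L * ‖θ1 - θ2‖ ^ 2 * ((∑ j, ‖∇ (f j) θ2‖) * ‖θ1 - θ2‖ / (16 * (N : ℝ))) :=
          mul_nonneg hcurv this
      _ = _ := by ring
  linarith
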